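/- arXiv:2512.14624 — 3 statements merged into one kernel-verified Lean document; each statement's English description precedes it below -/
import Mathlib

section
/- For p, q ∈ [0,1] with kl(p,q) defined as p·log(p/q) + (1−p)·log((1−p)/(1−q)) (with the conventions kl(0,q) = −log(1−q) and kl(1,q) = −log q), we have kl(p,q) ≥ 9(p−q)² / (2(p+2q)(3−p−2q)). -/
open Real

/-- The Bernoulli Kullback–Leibler divergence `kl : [0,1] × [0,1] → [0,∞]`, with the
conventions `kl(0,q) = −log(1−q)`, `kl(1,q) = −log q`, and the value `∞` when a
logarithm of zero would occur. -/
noncomputable def bernKL (p q : ℝ) : EReal :=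
  if p = 0 then (if q = 1 then ⊤ else ((-Real.log (1 - q) : ℝ) : EReal))
  else if p = 1 then (if q = 0 then ⊤ else ((-Real.log q : ℝ) : EReal))
  else if q = 0 ∨ q = 1 then ⊤
  else ((p * Real.log (p / q) + (1 - p) * Real.log ((1 - p) / (1 - q)) : ℝ) : EReal)

/-! For fixed `p ∈ (0,1)`, the difference `kl(p, ·) - bound(p, ·)` vanishes at `p` and its
derivative at `q` is `4 (q - p)³ P(p, q) / (q (1 - q) D(p, q)²)`, where `D` is the denominator of the
bound and `P` is a quadratic positive on `[0,1]²`; so `p` minimises the difference on `(0,1)`.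
The real formula for `kl(p, q)` is continuous in `p ∈ [0,1]`, which gives the cases `p ∈ {0,1}`,
and for `q ∈ {0,1}` the divergence is infinite unless `p = q`, when both sides vanish. -/

open Set

theorem Convex.isMinOn_of_hasDerivAt_of_sub_mul_nonneg {s : Set ℝ} {f f' : ℝ → ℝ} {a : ℝ}
    (hs : Convex ℝ s) (ha : a ∈ s) (hf : ∀ x ∈ s, HasDerivAt f (f' x) x)
    (hsign : ∀ x ∈ s, 0 ≤ (x - a) * f' x) : IsMinOn f s a := by
  have hcont : ContinuousOn f s := fun x hx ↦ (hf x hx).continuousAt.continuousWithinAt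
  have mvt : ∀ ⦃x y⦄, x ∈ s → y ∈ s → x < y →
      ∃ c ∈ Ioo x y, f y - f x = f' c * (y - x) := fun x y hx hy hxy ↦ by
    have hIcc := hs.ordConnected.out hx hy
    obtain ⟨c, hc, hslope⟩ := exists_hasDerivAt_eq_slope f f' hxy (hcont.mono hIcc)
      fun z hz ↦ hf z (hIcc (Ioo_subset_Icc_self hz))
    exact ⟨c, hc, by rw [hslope, div_mul_cancel₀ _ (sub_ne_zero.2 hxy.ne')]⟩
  refine isMinOn_iff.2 fun x hx ↦ ?_
  rcases lt_trichotomy a x with hax | rfl | hxa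
  · obtain ⟨c, ⟨hac, hcx⟩, hdiff⟩ := mvt ha hx hax
    have hc : c ∈ s := hs.ordConnected.out ha hx ⟨hac.le, hcx.le⟩
    have : 0 ≤ f' c := nonneg_of_mul_nonneg_right (hsign c hc) (sub_pos.2 hac)
    nlinarith
  · exact le_rfl
  · obtain ⟨c, ⟨hxc, hca⟩, hdiff⟩ := mvt hx ha hxa
    have hc : c ∈ s := hs.ordConnected.out hx ha ⟨hxc.le, hca.le⟩
    have : f' c ≤ 0 := nonpos_of_mul_nonneg_right (hsign c hc) (sub_neg.2 hca)
    nlinarith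

theorem continuous_mul_log_div (c : ℝ) : Continuous fun x ↦ x * log (x / c) := by
  rcases eq_or_ne c 0 with rfl | hc
  · simpa using continuous_const
  · convert (continuous_mul_log.comp (continuous_id.div_const c)).const_mul c using 1
    ext x
    simp only [Function.comp_apply, id]
    field_simp

-- With `Real.log 0 = 0` this also covers the conventions at `p ∈ {0,1}`.
noncomputable def klReal (p q : ℝ) : ℝ :=
  p * log (p / q) + (1 - p) * log ((1 - p) / (1 - q))

noncomputable def klLowerBound (p q : ℝ) : ℝ :=
  9 * (p - q) ^ 2 / (2 * (p + 2 * q) * (3 - p - 2 * q))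

theorem bernKL_eq_klReal {p q : ℝ} (hq₀ : q ≠ 0) (hq₁ : q ≠ 1) : bernKL p q = klReal p q := by
  have : 1 - q ≠ 0 := sub_ne_zero.2 hq₁.symm
  unfold bernKL klReal
  split_ifs with hp₀ hp₁ <;> simp_all

theorem bernKL_self (p : ℝ) : bernKL p p = 0 := by
  unfold bernKL
  split_ifs with hp₀ hp₁ h <;> simp_all [eq_comm]

theorem bernKL_eq_top {p q : ℝ} (hq : q = 0 ∨ q = 1) (hpq : p ≠ q) : bernKL p q = ⊤ := by
  unfold bernKL
  rcases hq with rfl | rfl <;> split_ifs <;> simp_all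

theorem continuous_klReal_left (q : ℝ) : Continuous fun p ↦ klReal p q :=
  (continuous_mul_log_div q).add
    ((continuous_mul_log_div (1 - q)).comp (continuous_const.sub continuous_id))

theorem hasDerivAt_klReal_right {p q : ℝ} (hp₀ : p ≠ 0) (hp₁ : p ≠ 1) (hq₀ : q ≠ 0)
    (hq₁ : q ≠ 1) : HasDerivAt (klReal p) ((q - p) / (q * (1 - q))) q := by
  have h1p : 1 - p ≠ 0 := sub_ne_zero.2 hp₁.symm
  have h1q : 1 - q ≠ 0 := sub_ne_zero.2 hq₁.symm
  have h₁ : HasDerivAt (fun x ↦ p * log (p / x)) (p * ((0 * q - p * 1) / q ^ 2 / (p / q))) q :=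
    (((hasDerivAt_const q p).div (hasDerivAt_id' q) hq₀).log (div_ne_zero hp₀ hq₀)).const_mul p
  have h₂ : HasDerivAt (fun x ↦ (1 - p) * log ((1 - p) / (1 - x)))
      ((1 - p) * ((0 * (1 - q) - (1 - p) * (0 - 1)) / (1 - q) ^ 2 / ((1 - p) / (1 - q)))) q :=
    (((hasDerivAt_const q (1 - p)).div ((hasDerivAt_const q 1).sub (hasDerivAt_id' q)) h1q).log
      (div_ne_zero h1p h1q)).const_mul (1 - p)
  refine (h₁.add h₂).congr_deriv ?_
  field_simp
  ring

theorem hasDerivAt_klLowerBound_right {p q : ℝ} (h₁ : p + 2 * q ≠ 0) (h₂ : 3 - p - 2 * q ≠ 0) :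
    HasDerivAt (klLowerBound p)
      (36 * (q - p) * ((p + 2 * q) * (3 - p - 2 * q) - (q - p) * (3 - 2 * p - 4 * q))
        / (2 * (p + 2 * q) * (3 - p - 2 * q)) ^ 2) q := by
  have hnum : HasDerivAt (fun x ↦ 9 * (p - x) ^ 2) (9 * (2 * (p - q) ^ 1 * (0 - 1))) q :=
    (((hasDerivAt_const q p).sub (hasDerivAt_id' q)).pow 2).const_mul 9
  have hden : HasDerivAt (fun x ↦ 2 * (p + 2 * x) * (3 - p - 2 * x))
      (2 * (0 + 2 * 1) * (3 - p - 2 * q) + 2 * (p + 2 * q) * (0 - 2 * 1)) q :=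
    (((hasDerivAt_const q p).add ((hasDerivAt_id' q).const_mul 2)).const_mul 2).mul
      ((hasDerivAt_const q (3 - p)).sub ((hasDerivAt_id' q).const_mul 2))
  refine (hnum.div hden (by simp [h₁, h₂])).congr_deriv ?_
  congr 1
  ring

theorem hasDerivAt_klReal_sub_klLowerBound_right {p q : ℝ} (hp : p ∈ Ioo 0 1) (hq : q ∈ Ioo 0 1) :
    HasDerivAt (fun x ↦ klReal p x - klLowerBound p x)
      (4 * (q - p) ^ 3 * (9 + p ^ 2 + 16 * q ^ 2 - 6 * p - 21 * q + 10 * p * q)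
        / (q * (1 - q) * (2 * (p + 2 * q) * (3 - p - 2 * q)) ^ 2)) q := by
  obtain ⟨hp₀, hp₁⟩ := hp
  obtain ⟨hq₀, hq₁⟩ := hq
  have h₁ : p + 2 * q ≠ 0 := by linarith
  have h₂ : 3 - p - 2 * q ≠ 0 := by linarith
  refine ((hasDerivAt_klReal_right hp₀.ne' hp₁.ne hq₀.ne' hq₁.ne).sub
    (hasDerivAt_klLowerBound_right h₁ h₂)).congr_deriv ?_
  have : 1 - q ≠ 0 := by linarith
  have : 3 - p - q * 2 ≠ 0 := by linarith
  field_simp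
  ring

theorem klLowerBound_le_klReal_of_mem_Ioo {p q : ℝ} (hp : p ∈ Ioo 0 1) (hq : q ∈ Ioo 0 1) :
    klLowerBound p q ≤ klReal p q := by
  have hmin : IsMinOn (fun x ↦ klReal p x - klLowerBound p x) (Ioo 0 1) p := by
    refine (convex_Ioo 0 1).isMinOn_of_hasDerivAt_of_sub_mul_nonneg hp
      (fun x hx ↦ hasDerivAt_klReal_sub_klLowerBound_right hp hx) fun x ⟨hx₀, hx₁⟩ ↦ ?_
    -- `64 P = (32 x + 10 p - 21)² + (3 + 2 p) (45 - 18 p)`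
    have hP : 0 ≤ 9 + p ^ 2 + 16 * x ^ 2 - 6 * p - 21 * x + 10 * p * x := by
      nlinarith [sq_nonneg (32 * x + 10 * p - 21), mul_nonneg (by linarith [hp.1] : 0 ≤ 3 + 2 * p)
        (by linarith [hp.2] : 0 ≤ 45 - 18 * p)]
    have h1x : 0 < 1 - x := by linarith
    rw [← mul_div_assoc]
    convert_to 0 ≤ 4 * ((x - p) ^ 2) ^ 2 * (9 + p ^ 2 + 16 * x ^ 2 - 6 * p - 21 * x + 10 * p * x)
      / (x * (1 - x) * (2 * (p + 2 * x) * (3 - p - 2 * x)) ^ 2) using 2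
    · ring
    exact div_nonneg (mul_nonneg (by positivity) hP) (by positivity)
  simpa [klReal, klLowerBound] using hmin hq

theorem klLowerBound_le_klReal {p q : ℝ} (hp : p ∈ Icc 0 1) (hq : q ∈ Ioo 0 1) :
    klLowerBound p q ≤ klReal p q := by
  rw [← closure_Ioo zero_ne_one] at hp
  refine le_on_closure (f := fun p ↦ klLowerBound p q)
    (fun p hp ↦ klLowerBound_le_klReal_of_mem_Ioo hp hq) ?_ (continuous_klReal_left q).continuousOn hp
  rw [closure_Ioo zero_ne_one]
  refine ContinuousOn.div (by fun_prop) (by fun_prop) fun p ⟨hp₀, hp₁⟩ ↦ ?_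
  have h₁ : 0 < p + 2 * q := by linarith [hq.1]
  have h₂ : 0 < 3 - p - 2 * q := by linarith [hq.2]
  positivity

/-- For `p, q ∈ [0,1]`, `kl(p,q) ≥ 9(p−q)² / (2(p+2q)(3−p−2q))`. -/
theorem bernKL_lower_bound (p q : ℝ) (hp : p ∈ Set.Icc (0:ℝ) 1) (hq : q ∈ Set.Icc (0:ℝ) 1) :
    ((9 * (p - q) ^ 2 / (2 * (p + 2 * q) * (3 - p - 2 * q)) : ℝ) : EReal) ≤ bernKL p q := by
  rcases eq_or_ne p q with rfl | hpq
  · simp [bernKL_self]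
  by_cases hq' : q ∈ Ioo 0 1
  · rw [bernKL_eq_klReal hq'.1.ne' hq'.2.ne]
    exact_mod_cast klLowerBound_le_klReal hp hq'
  · have : q = 0 ∨ q = 1 := by
      contrapose! hq'
      exact ⟨hq.1.lt_of_ne' hq'.1, hq.2.lt_of_ne hq'.2⟩
    rw [bernKL_eq_top this hpq]
    exact le_top
end

section
/- For p, q ∈ [0,1] and η > 0, if kl(p,q) < 9η/2 then |p − (2(1−2η)q + 3η)/(2(1+η))| ≤ 3·√(4q(1−q)η + η²)/(2(1+η)). -/
/-!
Write `kl(p, q) = ∫_q^p (p - s) / (s (1 - s)) ds`. By AM–GM the integrand is at least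
`2c (p - s) - c² (p - s) s (1 - s)` for every constant `c`; integrating and taking `c = 9 / w` with
`w = (p + 2q)(3 - p - 2q)` gives the Bernstein-type bound `kl(p, q) ≥ 9 (p - q)² / (2w)`.
Hence `kl(p, q) < 9η/2` forces `(p - q)² ≤ η w`, a quadratic inequality in `p` whose solution
set is the claimed interval.
-/

open Real

/-- Agrees with `bernKL` whenever `0 < q < 1`: the conventions at `p ∈ {0, 1}` come out of
`0 * log _ = 0`. -/
noncomputable def bernKLReal (p q : ℝ) : ℝ :=
  p * log (p / q) + (1 - p) * log ((1 - p) / (1 - q))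

lemma bernKLReal_one_sub (p q : ℝ) : bernKLReal (1 - p) (1 - q) = bernKLReal p q := by
  simp only [bernKLReal, sub_sub_cancel]
  ring

lemma bernKL_eq_coe_bernKLReal {p q : ℝ} (hq0 : q ≠ 0) (hq1 : q ≠ 1) :
    bernKL p q = bernKLReal p q := by
  unfold bernKL bernKLReal
  split_ifs with hp0 hp1 hq
  · simp [hp0, log_inv]
  · simp [hp1, log_inv]
  · exact (hq.elim hq0 hq1).elim
  · rfl

lemma bernKL_zero_right_eq_top {p : ℝ} (hp : p ≠ 0) : bernKL p 0 = ⊤ := by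
  simp [bernKL, hp]

lemma bernKL_one_right_eq_top {p : ℝ} (hp : p ≠ 1) : bernKL p 1 = ⊤ := by
  simp [bernKL, hp]

/-- An antiderivative of `(p - s) * (1 - c * s * (1 - s)) ^ 2 / (s * (1 - s))`, the AM–GM
defect of `(p - s) / (s * (1 - s)) ≥ 2 * c * (p - s) - c ^ 2 * (p - s) * s * (1 - s)`. -/
noncomputable def klPotential (p c s : ℝ) : ℝ :=
  p * log s + (1 - p) * log (1 - s) - c * (2 * p * s - s ^ 2)
    + c ^ 2 * (p * s ^ 2 / 2 - (p + 1) * s ^ 3 / 3 + s ^ 4 / 4)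

lemma hasDerivAt_klPotential {p c s : ℝ} (hs0 : 0 < s) (hs1 : s < 1) :
    HasDerivAt (klPotential p c) ((p - s) * (1 - c * s * (1 - s)) ^ 2 / (s * (1 - s))) s := by
  have h1s : 1 - s ≠ 0 := sub_ne_zero.2 hs1.ne'
  have hlog : HasDerivAt (fun s => log (1 - s)) (-1 / (1 - s)) s :=
    (((hasDerivAt_id s).const_sub 1).log h1s).congr_deriv (by simp)
  have hquad : HasDerivAt (fun s => 2 * p * s - s ^ 2) (2 * p - 2 * s) s :=
    (((hasDerivAt_id s).const_mul (2 * p)).sub (hasDerivAt_pow 2 s)).congr_deriv (by simp)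
  have hquart : HasDerivAt (fun s => p * s ^ 2 / 2 - (p + 1) * s ^ 3 / 3 + s ^ 4 / 4)
      (p * s - (p + 1) * s ^ 2 + s ^ 3) s :=
    (((((hasDerivAt_pow 2 s).const_mul p).div_const 2).sub
      (((hasDerivAt_pow 3 s).const_mul (p + 1)).div_const 3)).add
      ((hasDerivAt_pow 4 s).div_const 4)).congr_deriv (by push_cast; ring)
  exact ((((hasDerivAt_log hs0.ne').const_mul p).add (hlog.const_mul (1 - p))).sub
    (hquad.const_mul c)).add (hquart.const_mul (c ^ 2)) |>.congr_deriv (by field_simp; ring)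

lemma continuousOn_klPotential {p q c : ℝ} (hq : 0 < q) (hp : p ≤ 1) :
    ContinuousOn (klPotential p c) (Set.Icc q p) := by
  obtain hp | rfl := hp.lt_or_eq
  · exact fun s hs => (hasDerivAt_klPotential (hq.trans_le hs.1) (hs.2.trans_lt hp))
      |>.continuousAt.continuousWithinAt
  · have hlog : ContinuousOn log (Set.Icc q 1) :=
      continuousOn_log.mono fun s hs => (hq.trans_le hs.1).ne'
    unfold klPotential
    simp only [sub_self, zero_mul, add_zero, one_mul]
    fun_prop

lemma monotoneOn_klPotential {p q c : ℝ} (hq : 0 < q) (hp : p ≤ 1) :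
    MonotoneOn (klPotential p c) (Set.Icc q p) := by
  refine monotoneOn_of_hasDerivWithinAt_nonneg (convex_Icc q p) (continuousOn_klPotential hq hp)
    (f' := fun s => (p - s) * (1 - c * s * (1 - s)) ^ 2 / (s * (1 - s))) (fun s hs => ?_)
    (fun s hs => ?_)
  all_goals rw [interior_Icc] at hs
  · exact (hasDerivAt_klPotential (hq.trans hs.1) (hs.2.trans_le hp)).hasDerivWithinAt
  · have hs0 : 0 < s := hq.trans hs.1
    have hs1 : 0 < 1 - s := sub_pos.2 (hs.2.trans_le hp)
    have hps : 0 ≤ p - s := sub_nonneg.2 hs.2.le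
    positivity

lemma klPotential_sub_klPotential {p q c : ℝ} (hq : 0 < q) (hqp : q < p) (hp : p ≤ 1) :
    klPotential p c p - klPotential p c q = bernKLReal p q - c * (p - q) ^ 2
      + c ^ 2 * ((p - q) ^ 2 * (2 * ((p + 2 * q) * (3 - p - 2 * q)) - (p - q) ^ 2) / 36) := by
  have hlog_one_sub :
      (1 - p) * log ((1 - p) / (1 - q)) = (1 - p) * log (1 - p) - (1 - p) * log (1 - q) := by
    obtain hp | rfl := hp.lt_or_eq
    · rw [log_div (sub_pos.2 hp).ne' (by linarith), mul_sub]
    · simp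
  rw [bernKLReal, hlog_one_sub, log_div (hq.trans hqp).ne' hq.ne', klPotential, klPotential]
  ring

lemma le_bernKLReal_of_lt {p q : ℝ} (hq : 0 < q) (hqp : q < p) (hp : p ≤ 1) (c : ℝ) :
    c * (p - q) ^ 2 - c ^ 2 * ((p - q) ^ 2 * ((p + 2 * q) * (3 - p - 2 * q)) / 18)
      ≤ bernKLReal p q := by
  have hmono :=
    monotoneOn_klPotential (c := c) hq hp ⟨le_rfl, hqp.le⟩ ⟨hqp.le, le_rfl⟩ hqp.le
  have := klPotential_sub_klPotential (c := c) hq hqp hp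
  nlinarith [sq_nonneg (c * (p - q) ^ 2)]

lemma sq_sub_div_le_bernKLReal_of_lt {p q : ℝ} (hq : 0 < q) (hqp : q < p) (hp : p ≤ 1) :
    9 * (p - q) ^ 2 / (2 * ((p + 2 * q) * (3 - p - 2 * q))) ≤ bernKLReal p q := by
  have hw : 0 < (p + 2 * q) * (3 - p - 2 * q) := mul_pos (by linarith) (by linarith)
  refine le_of_eq_of_le ?_ (le_bernKLReal_of_lt hq hqp hp (9 / ((p + 2 * q) * (3 - p - 2 * q))))
  field_simp
  ring

lemma sq_sub_div_le_bernKLReal {p q : ℝ} (hp : p ∈ Set.Icc (0 : ℝ) 1) (hq0 : 0 < q)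
    (hq1 : q < 1) :
    9 * (p - q) ^ 2 / (2 * ((p + 2 * q) * (3 - p - 2 * q))) ≤ bernKLReal p q := by
  rcases lt_trichotomy p q with hpq | rfl | hqp
  · have := sq_sub_div_le_bernKLReal_of_lt (p := 1 - p) (q := 1 - q) (by linarith) (by linarith)
      (by linarith [hp.1])
    rw [bernKLReal_one_sub] at this
    convert this using 2 <;> ring
  · simp [bernKLReal, hq0.ne', (sub_pos.2 hq1).ne']
  · exact sq_sub_div_le_bernKLReal_of_lt hq0 hqp hp.2

lemma sq_sub_le_of_bernKL_lt {p q x : ℝ} (hp : p ∈ Set.Icc (0 : ℝ) 1)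
    (hq : q ∈ Set.Icc (0 : ℝ) 1) (h : bernKL p q < (x : EReal)) :
    9 * (p - q) ^ 2 ≤ 2 * x * ((p + 2 * q) * (3 - p - 2 * q)) := by
  rcases hq.1.eq_or_lt with rfl | hq0
  · obtain rfl : p = 0 := by
      by_contra hp0
      exact not_top_lt (bernKL_zero_right_eq_top hp0 ▸ h)
    norm_num
  rcases hq.2.eq_or_lt with rfl | hq1
  · obtain rfl : p = 1 := by
      by_contra hp1
      exact not_top_lt (bernKL_one_right_eq_top hp1 ▸ h)
    norm_num
  have hw : 0 < (p + 2 * q) * (3 - p - 2 * q) := mul_pos (by linarith [hp.1]) (by linarith [hp.2])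
  rw [bernKL_eq_coe_bernKLReal hq0.ne' hq1.ne, EReal.coe_lt_coe_iff] at h
  have := (sq_sub_div_le_bernKLReal hp hq0 hq1).trans h.le
  rw [div_le_iff₀ (by positivity)] at this
  linarith

lemma abs_sub_le_of_sq_sub_le {p q η : ℝ} (hη : 0 < 1 + η)
    (h : (p - q) ^ 2 ≤ η * ((p + 2 * q) * (3 - p - 2 * q))) :
    |p - (2 * (1 - 2 * η) * q + 3 * η) / (2 * (1 + η))| ≤
      3 * √(4 * q * (1 - q) * η + η ^ 2) / (2 * (1 + η)) := by
  have hdefect : 9 * (4 * q * (1 - q) * η + η ^ 2)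
      - (2 * (1 + η) * p - (2 * (1 - 2 * η) * q + 3 * η)) ^ 2
      = 4 * (1 + η) * (η * ((p + 2 * q) * (3 - p - 2 * q)) - (p - q) ^ 2) := by ring
  have hdefect_nonneg : 0 ≤ 4 * (1 + η) * (η * ((p + 2 * q) * (3 - p - 2 * q)) - (p - q) ^ 2) :=
    mul_nonneg (by positivity) (sub_nonneg.2 h)
  have hrad : 0 ≤ 4 * q * (1 - q) * η + η ^ 2 := by nlinarith
  have hcenter : p - (2 * (1 - 2 * η) * q + 3 * η) / (2 * (1 + η))
      = (2 * (1 + η) * p - (2 * (1 - 2 * η) * q + 3 * η)) / (2 * (1 + η)) := by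
    field_simp
  rw [hcenter, abs_div, abs_of_pos (a := 2 * (1 + η)) (by positivity)]
  gcongr
  apply abs_le_of_sq_le_sq _ (by positivity)
  rw [mul_pow, sq_sqrt hrad]
  linarith

/-- If `kl(p,q) < 9η/2` then `|p − (2(1−2η)q + 3η)/(2(1+η))| ≤ 3√(4q(1−q)η + η²)/(2(1+η))`. -/
theorem bernKL_p_localization (p q η : ℝ) (hp : p ∈ Set.Icc (0:ℝ) 1)
    (hq : q ∈ Set.Icc (0:ℝ) 1) (hη : 0 < η)
    (h : bernKL p q < ((9 * η / 2 : ℝ) : EReal)) :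
    |p - (2 * (1 - 2 * η) * q + 3 * η) / (2 * (1 + η))| ≤
      3 * Real.sqrt (4 * q * (1 - q) * η + η ^ 2) / (2 * (1 + η)) := by
  refine abs_sub_le_of_sq_sub_le (by linarith) ?_
  have := sq_sub_le_of_bernKL_lt hp hq h
  linarith
end

section
/- Let f₀ be a continuous log-concave probability density on ℝ with decreasing score function ψ₀ (a choice of subderivative of log f₀ on the support, extended by ±∞ outside), let h > 0, let K be the triangular kernel, and let f_h := K_h * f₀ with score ψ_h := f_h'/f_h. Then for all x ∈ ℝ, ψ_h(x+h) ≤ ψ₀(x) ≤ ψ_h(x−h). -/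
open MeasureTheory Real

/-- The triangular kernel `K(x) = (1 − |x|)𝟙{|x| ≤ 1}`. -/
noncomputable def triKernel (x : ℝ) : ℝ := if |x| ≤ 1 then 1 - |x| else 0

/-- The rescaled triangular kernel `K_h = h⁻¹ K(·/h)`. -/
noncomputable def triKernelH (h x : ℝ) : ℝ := h⁻¹ * triKernel (x / h)

/-- The weak derivative of `K_h`: `K_h'(x) = −h⁻² sgn(x) 𝟙{|x| < h}`. -/
noncomputable def triKernelH' (h x : ℝ) : ℝ := if |x| < h then -(Real.sign x) / h ^ 2 else 0

/-- Convolution `(φ * f)(x) := ∫ φ(x − y) f(y) dy`. -/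
noncomputable def conv (φ f : ℝ → ℝ) (x : ℝ) : ℝ := ∫ y, φ (x - y) * f y

/-!
At a point `x` of the support, `c = ψ₀(x)` is finite: an infinite score there would make `f₀`
constant on a half-line. Since the slopes of `log f₀` are bounded by the score, the tilted density
`g(y) = f₀(y) e^{-c(y - x)}` is nonincreasing on `[x, ∞)`. At `z = x + h` the kernels only see
`[x, x + 2h]`, where `h² (c K_h - K_h')(z - y) f₀(y) = g(y) G'(y)` with
`G(y) = h² K_h(z - y) e^{c(y - x)}`. As `G` vanishes at both ends and `G'` changes sign once, at
some `m`, we get `∫ g G' = ∫ (g - g(m)) G' ≥ 0`, that is `ψ_h(x + h) ≤ c`. Reflecting `f₀` about `x`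
gives `c ≤ ψ_h(x - h)`. Off the support both inequalities are the boundary conventions.
-/

open Set

def LogConcave (f : ℝ → ℝ) : Prop :=
  ∀ x y : ℝ, ∀ t ∈ Icc (0 : ℝ) 1, f x ^ t * f y ^ (1 - t) ≤ f (t * x + (1 - t) * y)

def IsScore (ψ : ℝ → EReal) (f : ℝ → ℝ) : Prop :=
  ∀ x y : ℝ, 0 < f x → 0 < f y → ∫ t in x..y, (ψ t).toReal = log (f y) - log (f x)

variable {f : ℝ → ℝ} {ψ : ℝ → EReal} {h : ℝ}

lemma LogConcave.ordConnected_setOf_pos (hf : LogConcave f) : {y | 0 < f y}.OrdConnected := by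
  refine ordConnected_of_Ioo fun u hu w hw huw v hv => ?_
  have ht : (w - v) / (w - u) ∈ Icc (0 : ℝ) 1 :=
    ⟨div_nonneg (by linarith [hv.2]) (by linarith),
      (div_le_one (by linarith)).2 (by linarith [hv.1])⟩
  have hv' : (w - v) / (w - u) * u + (1 - (w - v) / (w - u)) * w = v := by
    field_simp; ring
  calc 0 < f u ^ ((w - v) / (w - u)) * f w ^ (1 - (w - v) / (w - u)) :=
        mul_pos (rpow_pos_of_pos hu _) (rpow_pos_of_pos hw _)
    _ ≤ f (_ * u + (1 - _) * w) := hf u w _ ht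
    _ = f v := by rw [hv']

lemma not_forall_pos_eq_of_integrable (hf : Continuous f) (hfi : Integrable f) {I : Set ℝ}
    [hI : I.OrdConnected] (hIvol : volume I = ⊤) {u : ℝ} (hu : u ∈ I) (hfu : 0 < f u) :
    ¬ ∀ v ∈ I, 0 < f v → f v = f u := by
  intro hall
  have hconst : EqOn f (fun _ => f u) I := by
    intro v hv
    by_contra hne
    have hfv : f v ≤ 0 := not_lt.1 fun hpos => hne (hall v hv hpos)
    have hmid : f u / 2 ∈ uIcc (f v) (f u) := by
      rw [uIcc_of_le (by linarith)]; constructor <;> linarith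
    obtain ⟨w, hw, hfw⟩ := intermediate_value_uIcc hf.continuousOn hmid
    have := hall w (hI.uIcc_subset hv hu hw) (by linarith)
    linarith
  have hint := (hfi.integrableOn (s := I)).congr_fun hconst hI.measurableSet
  rw [integrableOn_const_iff, hIvol] at hint
  simp [hfu.ne'] at hint

lemma mul_exp_le_mul_exp_of_log_sub_log_le {a b c p q r : ℝ} (ha : 0 < a) (hb : 0 < b)
    (hlog : log b - log a ≤ c * (q - p)) : b * exp (-(c * (q - r))) ≤ a * exp (-(c * (p - r))) := by
  rw [← exp_log ha, ← exp_log hb, ← exp_add, ← exp_add, exp_le_exp]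
  linarith

namespace IsScore

lemma eq_of_toReal_eq_zero (hψ : IsScore ψ f) {u v : ℝ} (hu : 0 < f u) (hv : 0 < f v)
    (h₀ : ∀ s ∈ uIcc u v, (ψ s).toReal = 0) : f v = f u := by
  have := hψ u v hu hv
  rw [intervalIntegral.integral_congr h₀, intervalIntegral.integral_zero] at this
  exact log_injOn_pos hv hu (by linarith)

lemma ne_top (hψ : IsScore ψ f) (hanti : Antitone ψ) (hf : Continuous f) (hfi : Integrable f)
    {u t : ℝ} (hu : 0 < f u) (hut : u ≤ t) : ψ t ≠ ⊤ := by
  intro htop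
  refine not_forall_pos_eq_of_integrable hf hfi volume_Iic (mem_Iic.2 le_rfl) hu
    fun v hv hfv => hψ.eq_of_toReal_eq_zero hu hfv fun s hs => ?_
  have hst : s ≤ t := hs.2.trans ((max_le le_rfl hv).trans hut)
  simp [top_le_iff.1 (htop ▸ hanti hst)]

lemma ne_bot (hψ : IsScore ψ f) (hanti : Antitone ψ) (hf : Continuous f) (hfi : Integrable f)
    {u t : ℝ} (hu : 0 < f u) (htu : t ≤ u) : ψ t ≠ ⊥ := by
  intro hbot
  refine not_forall_pos_eq_of_integrable hf hfi volume_Ici (mem_Ici.2 le_rfl) hu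
    fun v hv hfv => hψ.eq_of_toReal_eq_zero hu hfv fun s hs => ?_
  have hts : t ≤ s := htu.trans ((le_min le_rfl hv).trans hs.1)
  simp [le_bot_iff.1 (hbot ▸ hanti hts)]

lemma antitoneOn_toReal (hψ : IsScore ψ f) (hanti : Antitone ψ) (hf : Continuous f)
    (hfi : Integrable f) {y₁ y₂ : ℝ} (hy₁ : 0 < f y₁) (hy₂ : 0 < f y₂) :
    AntitoneOn (fun t => (ψ t).toReal) (Icc y₁ y₂) := fun _ hs _ ht hst =>
  EReal.toReal_le_toReal (hanti hst) (hψ.ne_bot hanti hf hfi hy₂ ht.2)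
    (hψ.ne_top hanti hf hfi hy₁ hs.1)

lemma log_sub_log_le (hψ : IsScore ψ f) (hanti : Antitone ψ) (hf : Continuous f)
    (hfi : Integrable f) {y₁ y₂ : ℝ} (hy₁ : 0 < f y₁) (hy₂ : 0 < f y₂) (h₁₂ : y₁ ≤ y₂) :
    log (f y₂) - log (f y₁) ≤ (ψ y₁).toReal * (y₂ - y₁) := by
  have hmono := hψ.antitoneOn_toReal hanti hf hfi hy₁ hy₂
  rw [← hψ y₁ y₂ hy₁ hy₂]
  calc ∫ t in y₁..y₂, (ψ t).toReal ≤ ∫ _ in y₁..y₂, (ψ y₁).toReal :=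
        intervalIntegral.integral_mono_on h₁₂ (uIcc_of_le h₁₂ ▸ hmono).intervalIntegrable
          intervalIntegrable_const fun s hs => hmono ⟨le_rfl, h₁₂⟩ hs hs.1
    _ = (ψ y₁).toReal * (y₂ - y₁) := by simp [mul_comm]

lemma le_log_sub_log (hψ : IsScore ψ f) (hanti : Antitone ψ) (hf : Continuous f)
    (hfi : Integrable f) {y₁ y₂ : ℝ} (hy₁ : 0 < f y₁) (hy₂ : 0 < f y₂) (h₁₂ : y₁ ≤ y₂) :
    (ψ y₂).toReal * (y₂ - y₁) ≤ log (f y₂) - log (f y₁) := by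
  have hmono := hψ.antitoneOn_toReal hanti hf hfi hy₁ hy₂
  rw [← hψ y₁ y₂ hy₁ hy₂]
  calc (ψ y₂).toReal * (y₂ - y₁) = ∫ _ in y₁..y₂, (ψ y₂).toReal := by simp [mul_comm]
    _ ≤ ∫ t in y₁..y₂, (ψ t).toReal :=
        intervalIntegral.integral_mono_on h₁₂ intervalIntegrable_const
          (uIcc_of_le h₁₂ ▸ hmono).intervalIntegrable fun s hs => hmono hs ⟨h₁₂, le_rfl⟩ hs.2

lemma antitoneOn_tilt (hψ : IsScore ψ f) (hanti : Antitone ψ) (hf : Continuous f)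
    (hfi : Integrable f) (hf₀ : ∀ y, 0 ≤ f y) (hsupp : {y | 0 < f y}.OrdConnected) {x : ℝ}
    (hx : 0 < f x) : AntitoneOn (fun y => f y * exp (-((ψ x).toReal * (y - x)))) (Ici x) := by
  intro y₁ hy₁ y₂ _ h₁₂
  rcases (hf₀ y₂).eq_or_lt with h₀ | hpos₂
  · simp only [← h₀, zero_mul]; exact mul_nonneg (hf₀ y₁) (exp_pos _).le
  have hpos₁ : 0 < f y₁ := hsupp.out hx hpos₂ ⟨hy₁, h₁₂⟩
  have hψ₁ : (ψ y₁).toReal ≤ (ψ x).toReal :=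
    hψ.antitoneOn_toReal hanti hf hfi hx hpos₂ ⟨le_rfl, hy₁.trans h₁₂⟩ ⟨hy₁, h₁₂⟩ hy₁
  refine mul_exp_le_mul_exp_of_log_sub_log_le hpos₁ hpos₂ ?_
  nlinarith [hψ.log_sub_log_le hanti hf hfi hpos₁ hpos₂ h₁₂]

lemma monotoneOn_tilt (hψ : IsScore ψ f) (hanti : Antitone ψ) (hf : Continuous f)
    (hfi : Integrable f) (hf₀ : ∀ y, 0 ≤ f y) (hsupp : {y | 0 < f y}.OrdConnected) {x : ℝ}
    (hx : 0 < f x) : MonotoneOn (fun y => f y * exp (-((ψ x).toReal * (y - x)))) (Iic x) := by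
  intro y₁ _ y₂ hy₂ h₁₂
  rcases (hf₀ y₁).eq_or_lt with h₀ | hpos₁
  · simp only [← h₀, zero_mul]; exact mul_nonneg (hf₀ y₂) (exp_pos _).le
  have hpos₂ : 0 < f y₂ := hsupp.out hpos₁ hx ⟨h₁₂, hy₂⟩
  have hψ₂ : (ψ x).toReal ≤ (ψ y₂).toReal :=
    hψ.antitoneOn_toReal hanti hf hfi hpos₂ hx ⟨le_rfl, hy₂⟩ ⟨hy₂, le_rfl⟩ hy₂
  refine mul_exp_le_mul_exp_of_log_sub_log_le hpos₂ hpos₁ ?_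
  nlinarith [hψ.le_log_sub_log hanti hf hfi hpos₁ hpos₂ h₁₂]

end IsScore

lemma integral_indicator_Ioo {F : ℝ → ℝ} {a b : ℝ} (hab : a ≤ b) :
    ∫ y, (Ioo a b).indicator F y = ∫ y in a..b, F y := by
  rw [integral_indicator measurableSet_Ioo, intervalIntegral.integral_of_le hab,
    integral_Ioc_eq_integral_Ioo]

lemma integral_indicator_Ioc {F : ℝ → ℝ} {a b : ℝ} (hab : a ≤ b) :
    ∫ y, (Ioc a b).indicator F y = ∫ y in a..b, F y := by
  rw [integral_indicator measurableSet_Ioc, intervalIntegral.integral_of_le hab]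

lemma integrable_indicator_Ioc {F : ℝ → ℝ} (hF : Continuous F) (a b : ℝ) :
    Integrable ((Ioc a b).indicator F) :=
  (hF.integrableOn_Icc.mono_set Ioc_subset_Icc_self).integrable_indicator measurableSet_Ioc

lemma integrable_indicator_Ioo {F : ℝ → ℝ} (hF : Continuous F) (a b : ℝ) :
    Integrable ((Ioo a b).indicator F) :=
  (hF.integrableOn_Icc.mono_set Ioo_subset_Icc_self).integrable_indicator measurableSet_Ioo

lemma triKernelH'_sub_eq (z y : ℝ) :
    triKernelH' h (z - y) =
      (Ioo z (z + h)).indicator (fun _ => 1 / h ^ 2) y -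
        (Ioo (z - h) z).indicator (fun _ => 1 / h ^ 2) y := by
  have hlt : |z - y| < h ↔ y ∈ Ioo (z - h) (z + h) := by
    rw [abs_lt, mem_Ioo]; constructor <;> rintro ⟨h₁, h₂⟩ <;> constructor <;> linarith
  unfold triKernelH'
  rcases lt_trichotomy y z with hyz | rfl | hyz
  · have hr : y ∉ Ioo z (z + h) := fun hy => hyz.not_gt hy.1
    rw [sign_of_pos (sub_pos.2 hyz), indicator_of_notMem hr]
    by_cases hy : z - h < y
    · have hl : y ∈ Ioo (z - h) z := ⟨hy, hyz⟩
      rw [if_pos (hlt.2 ⟨hy, by linarith⟩), indicator_of_mem hl]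
      ring
    · have hl : y ∉ Ioo (z - h) z := fun hy' => hy hy'.1
      rw [if_neg (fun hy' => hy (hlt.1 hy').1), indicator_of_notMem hl]
      ring
  · simp
  · have hl : y ∉ Ioo (z - h) z := fun hy => hyz.not_gt hy.2
    rw [sign_of_neg (sub_neg.2 hyz), indicator_of_notMem hl]
    by_cases hy : y < z + h
    · have hr : y ∈ Ioo z (z + h) := ⟨hyz, hy⟩
      rw [if_pos (hlt.2 ⟨by linarith, hy⟩), indicator_of_mem hr]
      ring
    · have hr : y ∉ Ioo z (z + h) := fun hy' => hy hy'.2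
      rw [if_neg (fun hy' => hy (hlt.1 hy').2), indicator_of_notMem hr]
      ring

lemma triKernelH_sub_eq (hh : 0 < h) (z y : ℝ) :
    triKernelH h (z - y) =
      (Ioc (z - h) z).indicator (fun y => (y - (z - h)) / h ^ 2) y +
        (Ioc z (z + h)).indicator (fun y => (z + h - y) / h ^ 2) y := by
  unfold triKernelH triKernel
  simp only [abs_div, abs_of_pos hh, div_le_one hh]
  rcases le_or_gt y z with hyz | hyz
  · have hr : y ∉ Ioc z (z + h) := fun hy => hyz.not_gt hy.1
    rw [abs_of_nonneg (sub_nonneg.2 hyz), indicator_of_notMem hr]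
    by_cases hy : z - h < y
    · have hl : y ∈ Ioc (z - h) z := ⟨hy, hyz⟩
      rw [if_pos (by linarith), indicator_of_mem hl]
      field_simp
      ring
    · have hl : y ∉ Ioc (z - h) z := fun hy' => hy hy'.1
      rw [indicator_of_notMem hl]
      split_ifs with h₁
      · rw [show z - y = h by linarith]; simp [hh.ne']
      · simp
  · have hl : y ∉ Ioc (z - h) z := fun hy => hyz.not_ge hy.2
    rw [abs_of_neg (sub_neg.2 hyz), indicator_of_notMem hl]
    by_cases hy : y ≤ z + h
    · have hr : y ∈ Ioc z (z + h) := ⟨hyz, hy⟩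
      rw [if_pos (by linarith), indicator_of_mem hr]
      field_simp
      ring
    · have hr : y ∉ Ioc z (z + h) := fun hy' => hy hy'.2
      rw [if_neg (by linarith), indicator_of_notMem hr]
      simp

lemma conv_triKernelH'_eq (hh : 0 < h) (hf : Continuous f) (z : ℝ) :
    conv (triKernelH' h) f z = ((∫ y in z..z + h, f y) - ∫ y in z - h..z, f y) / h ^ 2 := by
  have hF : Continuous fun y => 1 / h ^ 2 * f y := by fun_prop
  simp_rw [conv, triKernelH'_sub_eq, sub_mul, ← indicator_mul_left]
  rw [integral_sub (integrable_indicator_Ioo hF _ _) (integrable_indicator_Ioo hF _ _),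
    integral_indicator_Ioo (by linarith), integral_indicator_Ioo (by linarith),
    intervalIntegral.integral_const_mul, intervalIntegral.integral_const_mul]
  ring

lemma conv_triKernelH_eq (hh : 0 < h) (hf : Continuous f) (z : ℝ) :
    conv (triKernelH h) f z =
      ((∫ y in z - h..z, (y - (z - h)) * f y) + ∫ y in z..z + h, (z + h - y) * f y) / h ^ 2 := by
  have hF₁ : Continuous fun y => (y - (z - h)) / h ^ 2 * f y := by fun_prop
  have hF₂ : Continuous fun y => (z + h - y) / h ^ 2 * f y := by fun_prop
  simp_rw [conv, triKernelH_sub_eq hh, add_mul, ← indicator_mul_left]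
  rw [integral_add (integrable_indicator_Ioc hF₁ _ _) (integrable_indicator_Ioc hF₂ _ _),
    integral_indicator_Ioc (by linarith), integral_indicator_Ioc (by linarith), add_div,
    ← intervalIntegral.integral_div, ← intervalIntegral.integral_div]
  simp_rw [div_mul_eq_mul_div]

lemma conv_triKernelH_pos (hh : 0 < h) (hf : Continuous f) (hf₀ : ∀ y, 0 ≤ f y) {z y : ℝ}
    (hy : y ∈ Ioo (z - h) (z + h)) (hfy : 0 < f y) : 0 < conv (triKernelH h) f z := by
  have hl₀ : ∀ u ∈ Icc (z - h) z, 0 ≤ (u - (z - h)) * f u := fun u hu =>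
    mul_nonneg (by linarith [hu.1]) (hf₀ u)
  have hr₀ : ∀ u ∈ Icc z (z + h), 0 ≤ (z + h - u) * f u := fun u hu =>
    mul_nonneg (by linarith [hu.2]) (hf₀ u)
  have hl := intervalIntegral.integral_nonneg (μ := volume) (by linarith) hl₀
  have hr := intervalIntegral.integral_nonneg (μ := volume) (by linarith) hr₀
  rw [conv_triKernelH_eq hh hf]
  refine div_pos ?_ (by positivity)
  rcases le_or_gt y z with hyz | hyz
  · linarith [intervalIntegral.integral_pos (by linarith) (by fun_prop)
      (fun u hu => hl₀ u (Ioc_subset_Icc_self hu))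
      ⟨y, ⟨hy.1.le, hyz⟩, mul_pos (by linarith [hy.1]) hfy⟩]
  · linarith [intervalIntegral.integral_pos (by linarith) (by fun_prop)
      (fun u hu => hr₀ u (Ioc_subset_Icc_self hu))
      ⟨y, ⟨hyz.le, hy.2.le⟩, mul_pos (by linarith [hy.2]) hfy⟩]

lemma triKernelH_neg (u : ℝ) : triKernelH h (-u) = triKernelH h u := by
  simp [triKernelH, triKernel, neg_div]

lemma triKernelH'_neg (u : ℝ) : triKernelH' h (-u) = -triKernelH' h u := by
  unfold triKernelH'
  simp only [abs_neg, Real.sign_neg]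
  split_ifs <;> ring

lemma conv_neg_left (φ : ℝ → ℝ) (z : ℝ) : conv (fun u => -φ u) f z = -conv φ f z := by
  simp [conv, integral_neg]

lemma conv_comp_sub_left (φ : ℝ → ℝ) (a z : ℝ) :
    conv φ (fun y => f (a - y)) z = conv (fun u => φ (-u)) f (a - z) := by
  unfold conv
  rw [← integral_sub_left_eq_self _ volume a]
  simp only [sub_sub_cancel]
  congr 1; ext y; ring_nf

lemma mul_integral_le_integral_mul_of_sign_change {g D : ℝ → ℝ} {s : Set ℝ} {a b m : ℝ}
    (hab : a ≤ b) (hg : AntitoneOn g s) (hs : Icc a b ⊆ s) (hm : m ∈ s) (hD : Continuous D)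
    (hpos : ∀ y ∈ Icc a b, y < m → 0 ≤ D y) (hneg : ∀ y ∈ Icc a b, m < y → D y ≤ 0) :
    g m * ∫ y in a..b, D y ≤ ∫ y in a..b, g y * D y := by
  have hgi : IntervalIntegrable g volume a b :=
    AntitoneOn.intervalIntegrable (hg.mono (uIcc_of_le hab ▸ hs))
  rw [← intervalIntegral.integral_const_mul]
  refine intervalIntegral.integral_mono_on hab ((hD.intervalIntegrable _ _).const_mul (g m))
    (hgi.mul_continuousOn hD.continuousOn) fun y hy => ?_
  rcases lt_trichotomy y m with hym | rfl | hym
  · exact mul_le_mul_of_nonneg_right (hg (hs hy) hm hym.le) (hpos y hy hym)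
  · rfl
  · exact mul_le_mul_of_nonpos_right (hg hm (hs hy) hym.le) (hneg y hy hym)

lemma integral_one_add_mul_mul_exp (c p a u v : ℝ) :
    ∫ y in u..v, (1 + c * (y - p)) * exp (c * (y - a)) =
      (v - p) * exp (c * (v - a)) - (u - p) * exp (c * (u - a)) := by
  refine intervalIntegral.integral_eq_sub_of_hasDerivAt
    (f := fun y => (y - p) * exp (c * (y - a))) (fun y _ => ?_)
    ((by fun_prop : Continuous fun y => (1 + c * (y - p)) * exp (c * (y - a))).intervalIntegrable
      _ _)
  have hlin : HasDerivAt (fun y => y - p) 1 y := (hasDerivAt_id' y).sub_const p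
  have hexp : HasDerivAt (fun y => exp (c * (y - a))) (exp (c * (y - a)) * (c * 1)) y :=
    (((hasDerivAt_id' y).sub_const a).const_mul c).exp
  exact (hlin.fun_mul hexp).congr_deriv (by ring)

lemma exists_tent_sign_change (a c : ℝ) (hh : 0 < h) :
    ∃ m, a ≤ m ∧
      (∀ y ∈ Icc a (a + h), (y < m → 0 ≤ 1 + c * (y - a)) ∧ (m < y → 1 + c * (y - a) ≤ 0)) ∧
      (∀ y ∈ Icc (a + h) (a + h + h),
        (y < m → 1 + c * (y - (a + h + h)) ≤ 0) ∧ (m < y → 0 ≤ 1 + c * (y - (a + h + h)))) := by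
  rcases lt_trichotomy c 0 with hc | rfl | hc
  · have hcc : c * c⁻¹ = 1 := mul_inv_cancel₀ hc.ne
    refine ⟨min (a + h) (a - c⁻¹), le_min (by linarith) (by nlinarith [inv_lt_zero.2 hc]),
      fun y hy => ⟨fun hym => ?_, fun hym => ?_⟩, fun y hy => ⟨fun hym => ?_, fun _ => ?_⟩⟩
    · nlinarith [lt_of_lt_of_le hym (min_le_right _ _)]
    · nlinarith [(min_lt_iff.1 hym).resolve_left (by linarith [hy.2])]
    · linarith [lt_of_lt_of_le hym (min_le_left _ _), hy.1]
    · nlinarith [hy.2]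
  · exact ⟨a + h, by linarith, fun y hy => ⟨fun _ => by linarith, fun _ => by linarith [hy.2]⟩,
      fun y hy => ⟨fun _ => by linarith [hy.1], fun _ => by linarith⟩⟩
  · have hcc : c * c⁻¹ = 1 := mul_inv_cancel₀ hc.ne'
    refine ⟨max (a + h) (a + h + h - c⁻¹), le_max_of_le_left (by linarith),
      fun y hy => ⟨fun _ => ?_, fun hym => ?_⟩, fun y hy => ⟨fun hym => ?_, fun hym => ?_⟩⟩
    · nlinarith [hy.1]
    · linarith [lt_of_le_of_lt (le_max_left _ _) hym, hy.2]
    · nlinarith [(lt_max_iff.1 hym).resolve_left (by linarith [hy.1])]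
    · nlinarith [lt_of_le_of_lt (le_max_right _ _) hym]

lemma tent_integral_nonneg {g : ℝ → ℝ} {a : ℝ} (c : ℝ) (hh : 0 < h)
    (hg : AntitoneOn g (Ici a)) :
    0 ≤ (∫ y in a..a + h, g y * ((1 + c * (y - a)) * exp (c * (y - a)))) -
      ∫ y in a + h..a + h + h, g y * ((1 + c * (y - (a + h + h))) * exp (c * (y - a))) := by
  obtain ⟨m, ham, hm₁, hm₂⟩ := exists_tent_sign_change a c hh
  have hl := mul_integral_le_integral_mul_of_sign_change
    (D := fun y => (1 + c * (y - a)) * exp (c * (y - a))) (by linarith) hg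
    (fun y hy => mem_Ici.2 hy.1) ham (by fun_prop)
    (fun y hy hym => mul_nonneg ((hm₁ y hy).1 hym) (exp_pos _).le)
    (fun y hy hym => mul_nonpos_of_nonpos_of_nonneg ((hm₁ y hy).2 hym) (exp_pos _).le)
  have hr := mul_integral_le_integral_mul_of_sign_change (D := fun y =>
      -((1 + c * (y - (a + h + h))) * exp (c * (y - a)))) (by linarith) hg
    (fun y hy => mem_Ici.2 (by linarith [hy.1])) ham (by fun_prop)
    (fun y hy hym =>
      neg_nonneg.2 (mul_nonpos_of_nonpos_of_nonneg ((hm₂ y hy).1 hym) (exp_pos _).le))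
    (fun y hy hym => neg_nonpos.2 (mul_nonneg ((hm₂ y hy).2 hym) (exp_pos _).le))
  simp only [mul_neg, intervalIntegral.integral_neg, integral_one_add_mul_mul_exp] at hl hr
  linear_combination hl + hr

lemma conv_triKernelH'_le_mul_conv_triKernelH (hh : 0 < h) (hf : Continuous f) {a c : ℝ}
    (hg : AntitoneOn (fun y => f y * exp (-(c * (y - a)))) (Ici a)) :
    conv (triKernelH' h) f (a + h) ≤ c * conv (triKernelH h) f (a + h) := by
  have untilt : ∀ p y, f y * exp (-(c * (y - a))) * ((1 + c * (y - p)) * exp (c * (y - a))) =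
      f y + c * ((y - p) * f y) := fun p y => by
    have : exp (-(c * (y - a))) * exp (c * (y - a)) = 1 := by rw [← exp_add]; simp
    linear_combination (1 + c * (y - p)) * f y * this
  have hsplit : ∀ p u v, ∫ y in u..v, f y * exp (-(c * (y - a))) *
      ((1 + c * (y - p)) * exp (c * (y - a))) =
      (∫ y in u..v, f y) + c * ∫ y in u..v, (y - p) * f y := fun p u v => by
    simp_rw [untilt]
    rw [intervalIntegral.integral_add (hf.intervalIntegrable _ _)
      ((Continuous.intervalIntegrable (by fun_prop) _ _).const_mul c),
      intervalIntegral.integral_const_mul]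
  have key := tent_integral_nonneg c hh hg
  rw [hsplit, hsplit] at key
  rw [conv_triKernelH'_eq hh hf, conv_triKernelH_eq hh hf, ← mul_div_assoc,
    div_le_div_iff_of_pos_right (by positivity)]
  have hrefl : ∫ y in a + h..a + h + h, (y - (a + h + h)) * f y =
      -∫ y in a + h..a + h + h, (a + h + h - y) * f y := by
    rw [← intervalIntegral.integral_neg]; congr 1; ext y; ring
  simp only [add_sub_cancel_right]
  linear_combination key - c * hrefl

lemma mul_conv_triKernelH_le_conv_triKernelH' (hh : 0 < h) (hf : Continuous f) {a c : ℝ}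
    (hg : MonotoneOn (fun y => f y * exp (-(c * (y - a)))) (Iic a)) :
    c * conv (triKernelH h) f (a - h) ≤ conv (triKernelH' h) f (a - h) := by
  have hrefl := conv_triKernelH'_le_mul_conv_triKernelH hh (f := fun y => f (a + a - y))
    (by fun_prop) (c := -c) (a := a) fun y₁ hy₁ y₂ hy₂ h₁₂ => by
      have := hg (mem_Iic.2 (by linarith [mem_Ici.1 hy₂])) (mem_Iic.2 (by linarith [mem_Ici.1 hy₁]))
        (by linarith : a + a - y₂ ≤ a + a - y₁)
      dsimp only at this ⊢
      convert this using 3 <;> ring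
  rw [conv_comp_sub_left, conv_comp_sub_left, show a + a - (a + h) = a - h by ring] at hrefl
  simp only [triKernelH_neg, triKernelH'_neg, conv_neg_left] at hrefl
  linarith

theorem smoothed_score_sandwich_general (f₀ : ℝ → ℝ) (hcont : Continuous f₀)
    (hf_nonneg : ∀ x, 0 ≤ f₀ x) (hf_int : Integrable f₀ volume)
    (hlogconc : ∀ x y : ℝ, ∀ t ∈ Set.Icc (0:ℝ) 1,
      f₀ x ^ t * f₀ y ^ (1 - t) ≤ f₀ (t * x + (1 - t) * y))
    (ψ₀ : ℝ → EReal) (hanti : Antitone ψ₀)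
    (hscore : ∀ x y : ℝ, 0 < f₀ x → 0 < f₀ y →
      ∫ t in x..y, (ψ₀ t).toReal = Real.log (f₀ y) - Real.log (f₀ x))
    (hψ₀_top : ∀ x : ℝ, (∀ y, 0 < f₀ y → x ≤ y) → ψ₀ x = ⊤)
    (hψ₀_bot : ∀ x : ℝ, (∀ y, 0 < f₀ y → y ≤ x) → ψ₀ x = ⊥)
    (h : ℝ) (hh : 0 < h)
    (ψh : ℝ → EReal)
    (hψh_top : ∀ z : ℝ, (∀ y, 0 < f₀ y → z + h ≤ y) → ψh z = ⊤)
    (hψh_bot : ∀ z : ℝ, (∀ y, 0 < f₀ y → y ≤ z - h) → ψh z = ⊥)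
    (hψh_val : ∀ z : ℝ, (∃ y, 0 < f₀ y ∧ y < z + h) → (∃ y, 0 < f₀ y ∧ z - h < y) →
      ψh z = ((conv (triKernelH' h) f₀ z / conv (triKernelH h) f₀ z : ℝ) : EReal)) :
    ∀ x : ℝ, ψh (x + h) ≤ ψ₀ x ∧ ψ₀ x ≤ ψh (x - h) := by
  have hψ : IsScore ψ₀ f₀ := hscore
  have hsupp := LogConcave.ordConnected_setOf_pos hlogconc
  intro x
  by_cases hl : ∀ y, 0 < f₀ y → x ≤ y
  · rw [hψ₀_top x hl, hψh_top (x - h) fun y hy => by linarith [hl y hy]]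
    exact ⟨le_top, le_rfl⟩
  by_cases hr : ∀ y, 0 < f₀ y → y ≤ x
  · rw [hψ₀_bot x hr, hψh_bot (x + h) fun y hy => by linarith [hr y hy]]
    exact ⟨le_rfl, bot_le⟩
  push Not at hl hr
  obtain ⟨u, hu, hux⟩ := hl
  obtain ⟨v, hv, hxv⟩ := hr
  have hx : 0 < f₀ x := hsupp.out hu hv ⟨hux.le, hxv.le⟩
  have hψx : ψ₀ x = ((ψ₀ x).toReal : EReal) := (EReal.coe_toReal
    (hψ.ne_top hanti hcont hf_int hx le_rfl) (hψ.ne_bot hanti hcont hf_int hx le_rfl)).symm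
  have hpos_r : 0 < conv (triKernelH h) f₀ (x + h) :=
    conv_triKernelH_pos hh hcont hf_nonneg (y := min v (x + h))
      ⟨lt_min (by linarith) (by linarith), by linarith [min_le_right v (x + h)]⟩
      (hsupp.out hx hv ⟨le_min hxv.le (by linarith), min_le_left _ _⟩)
  have hpos_l : 0 < conv (triKernelH h) f₀ (x - h) :=
    conv_triKernelH_pos hh hcont hf_nonneg (y := max u (x - h))
      ⟨by linarith [le_max_right u (x - h)], max_lt (by linarith) (by linarith)⟩
      (hsupp.out hu hx ⟨le_max_left _ _, max_le hux.le (by linarith)⟩)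
  rw [hψx, hψh_val (x + h) ⟨x, hx, by linarith⟩ ⟨v, hv, by linarith⟩,
    hψh_val (x - h) ⟨u, hu, by linarith⟩ ⟨x, hx, by linarith⟩, EReal.coe_le_coe_iff,
    EReal.coe_le_coe_iff, div_le_iff₀ hpos_r, le_div_iff₀ hpos_l]
  exact ⟨conv_triKernelH'_le_mul_conv_triKernelH hh hcont
      (hψ.antitoneOn_tilt hanti hcont hf_int hf_nonneg hsupp hx),
    mul_conv_triKernelH_le_conv_triKernelH' hh hcont
      (hψ.monotoneOn_tilt hanti hcont hf_int hf_nonneg hsupp hx)⟩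

/-- Score sandwich for smoothed log-concave densities: if `f₀` is a continuous log-concave
probability density with (extended-real-valued) decreasing score `ψ₀`, `f_h := K_h * f₀`
with score `ψ_h := f_h'/f_h` (with the boundary conventions `ψ_h(z) = +∞` when
`z + h ≤ inf supp f₀` and `ψ_h(z) = −∞` when `z − h ≥ sup supp f₀`), then
`ψ_h(x+h) ≤ ψ₀(x) ≤ ψ_h(x−h)` for all `x`. -/
theorem smoothed_score_sandwich (f₀ : ℝ → ℝ) (hcont : Continuous f₀)
    (hf_nonneg : ∀ x, 0 ≤ f₀ x) (hf_int : Integrable f₀ volume) (hf_mass : ∫ x, f₀ x = 1)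
    (hlogconc : ∀ x y : ℝ, ∀ t ∈ Set.Icc (0:ℝ) 1,
      f₀ x ^ t * f₀ y ^ (1 - t) ≤ f₀ (t * x + (1 - t) * y))
    (ψ₀ : ℝ → EReal) (hanti : Antitone ψ₀)
    (hscore : ∀ x y : ℝ, 0 < f₀ x → 0 < f₀ y →
      ∫ t in x..y, (ψ₀ t).toReal = Real.log (f₀ y) - Real.log (f₀ x))
    (hψ₀_top : ∀ x : ℝ, (∀ y, 0 < f₀ y → x ≤ y) → ψ₀ x = ⊤)
    (hψ₀_bot : ∀ x : ℝ, (∀ y, 0 < f₀ y → y ≤ x) → ψ₀ x = ⊥)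
    (h : ℝ) (hh : 0 < h)
    (ψh : ℝ → EReal)
    (hψh_top : ∀ z : ℝ, (∀ y, 0 < f₀ y → z + h ≤ y) → ψh z = ⊤)
    (hψh_bot : ∀ z : ℝ, (∀ y, 0 < f₀ y → y ≤ z - h) → ψh z = ⊥)
    (hψh_val : ∀ z : ℝ, (∃ y, 0 < f₀ y ∧ y < z + h) → (∃ y, 0 < f₀ y ∧ z - h < y) →
      ψh z = ((conv (triKernelH' h) f₀ z / conv (triKernelH h) f₀ z : ℝ) : EReal)) :
    ∀ x : ℝ, ψh (x + h) ≤ ψ₀ x ∧ ψ₀ x ≤ ψh (x - h) :=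
  smoothed_score_sandwich_general f₀ hcont hf_nonneg hf_int hlogconc ψ₀ hanti hscore hψ₀_top hψ₀_bot
    h hh ψh hψh_top hψh_bot hψh_val
end
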